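/- Let a be a non-periodic recurrent point of σ on Σ^N and suppose Σ(a) contains a periodic point x_0 of period k. Then for all m_1, m_2 ≥ 0, liminf_{n→∞} ρ(σ^n(σ^{k m_1}(a)), σ^n(σ^{k m_2}(a))) = 0. -/
import Mathlib


open Filter Topology Set

/-- The one-sided shift map on sequences. -/
def shift {X : Type*} (x : ℕ → X) : ℕ → X := fun i => x (i + 1)

/-- The discrete metric on a type. -/
noncomputable def discMetric {X : Type*} [DecidableEq X] (m n : X) : ℝ :=
  if m = n then 0 else 1

/-- The metric on the sequence space over a discrete alphabet:
`ρ(x,y) = Σ_i 2^{-i} d(x_i,y_i)/(1+d(x_i,y_i))` with `d` the discrete metric. -/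
noncomputable def rho {X : Type*} [DecidableEq X] (x y : ℕ → X) : ℝ :=
  ∑' i : ℕ, (1 / 2 : ℝ) ^ i * (discMetric (x i) (y i) / (1 + discMetric (x i) (y i)))

/-- A point is recurrent for `F` if every neighbourhood contains some forward iterate. -/
def IsRecurrentPt {M : Type*} [TopologicalSpace M] (F : M → M) (x : M) : Prop :=
  ∀ U ∈ nhds x, ∃ n > 0, F^[n] x ∈ U

/-- A point is periodic for `F` if `F^[n] x = x` for some `n > 0`. -/
def IsPeriodicPoint {M : Type*} (F : M → M) (x : M) : Prop :=
  ∃ n > 0, F^[n] x = x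

/-- A point is nonwandering for `F` if for every neighbourhood `U` there is `n > 0`
with `F^[n] '' U ∩ U` nonempty. -/
def IsNonwanderingPt {M : Type*} [TopologicalSpace M] (F : M → M) (x : M) : Prop :=
  ∀ U ∈ nhds x, ∃ n > 0, (F^[n] '' U ∩ U).Nonempty

/- ## Auxiliary lemmas -/

lemma shift_iterate_apply {X : Type*} (x : ℕ → X) (n i : ℕ) :
    shift^[n] x i = x (i + n) := by
  induction n generalizing i with
  | zero => rfl
  | succ n ih =>
    rw [Function.iterate_succ_apply', shift, ih]
    ring_nf

lemma rho_term_nonneg {X : Type*} [DecidableEq X] (x y : ℕ → X) (i : ℕ) :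
    0 ≤ (1 / 2 : ℝ) ^ i * (discMetric (x i) (y i) / (1 + discMetric (x i) (y i))) := by
  unfold discMetric; split <;> positivity

lemma rho_term_le {X : Type*} [DecidableEq X] (x y : ℕ → X) (i : ℕ) :
    (1 / 2 : ℝ) ^ i * (discMetric (x i) (y i) / (1 + discMetric (x i) (y i)))
      ≤ (1 / 2 : ℝ) ^ i * (1 / 2) := by
  unfold discMetric
  have h : (0:ℝ) ≤ (1/2:ℝ)^i := by positivity
  split <;> nlinarith

lemma rho_summable {X : Type*} [DecidableEq X] (x y : ℕ → X) :
    Summable (fun i : ℕ =>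
      (1 / 2 : ℝ) ^ i * (discMetric (x i) (y i) / (1 + discMetric (x i) (y i)))) := by
  apply Summable.of_nonneg_of_le (rho_term_nonneg x y) (rho_term_le x y)
  exact (summable_geometric_of_lt_one (by norm_num) (by norm_num)).mul_right _

lemma rho_nonneg {X : Type*} [DecidableEq X] (x y : ℕ → X) : 0 ≤ rho x y :=
  tsum_nonneg (rho_term_nonneg x y)

set_option maxHeartbeats 1000000 in
lemma rho_le_one {X : Type*} [DecidableEq X] (x y : ℕ → X) : rho x y ≤ 1 := by
  have h := Summable.tsum_le_tsum (rho_term_le x y) (rho_summable x y)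
    ((summable_geometric_of_lt_one (by norm_num) (by norm_num)).mul_right (1/2 : ℝ))
  calc rho x y ≤ ∑' i : ℕ, (1 / 2 : ℝ) ^ i * (1 / 2) := h
    _ = 1 := by
        rw [tsum_mul_right, tsum_geometric_of_lt_one (by norm_num) (by norm_num)]
        norm_num

set_option maxHeartbeats 1000000 in
lemma rho_le_of_agree {X : Type*} [DecidableEq X] (x y : ℕ → X) (M : ℕ)
    (h : ∀ i < M, x i = y i) : rho x y ≤ (1 / 2 : ℝ) ^ M := by
  have hsum := rho_summable x y
  have hzero : ∑ i ∈ Finset.range M, (fun i : ℕ =>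
      (1 / 2 : ℝ) ^ i * (discMetric (x i) (y i) / (1 + discMetric (x i) (y i)))) i = 0 := by
    apply Finset.sum_eq_zero
    intro i hi
    have hd : discMetric (x i) (y i) = 0 := by
      rw [discMetric, if_pos (h i (Finset.mem_range.mp hi))]
    simp only [hd]
    norm_num
  have hsplit := Summable.sum_add_tsum_nat_add M hsum
  set f : ℕ → ℝ := fun i : ℕ =>
    (1 / 2 : ℝ) ^ i * (discMetric (x i) (y i) / (1 + discMetric (x i) (y i))) with hf
  have htail : ∑' i : ℕ, f (i + M) ≤ ∑' i : ℕ, (1 / 2 : ℝ) ^ (i + M) * (1 / 2) := by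
    apply Summable.tsum_le_tsum
    · intro i; exact rho_term_le x y (i + M)
    · exact (Summable.comp_injective hsum (add_left_injective M))
    · have : Summable (fun i : ℕ => (1 / 2 : ℝ) ^ i * (1/2)) :=
        (summable_geometric_of_lt_one (by norm_num) (by norm_num)).mul_right _
      exact (Summable.comp_injective this (add_left_injective M))
  have hgeom : ∑' i : ℕ, (1 / 2 : ℝ) ^ (i + M) * (1 / 2) = (1 / 2 : ℝ) ^ M := by
    have : ∀ i : ℕ, (1 / 2 : ℝ) ^ (i + M) * (1 / 2)
        = (1 / 2 : ℝ) ^ i * ((1 / 2 : ℝ) ^ M * (1 / 2)) := by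
      intro i; rw [pow_add]; ring
    rw [tsum_congr this, tsum_mul_right,
      tsum_geometric_of_lt_one (by norm_num) (by norm_num)]
    norm_num
    ring
  have : rho x y = ∑' i : ℕ, f (i + M) := by
    rw [rho, ← hsplit, hzero, zero_add]
  rw [this]
  calc ∑' i : ℕ, f (i + M) ≤ ∑' i : ℕ, (1 / 2 : ℝ) ^ (i + M) * (1 / 2) := htail
    _ = (1 / 2 : ℝ) ^ M := hgeom

lemma agree_mem_nhds {N : ℕ} (x : ℕ → Fin N) (L : ℕ) :
    {y : ℕ → Fin N | ∀ i < L, y i = x i} ∈ nhds x := by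
  have heq : {y : ℕ → Fin N | ∀ i < L, y i = x i}
      = ⋂ i ∈ Finset.range L, (fun y : ℕ → Fin N => y i) ⁻¹' {x i} := by
    ext y; simp [Set.mem_iInter]
  rw [heq, Filter.biInter_finset_mem]
  intro i _
  exact (continuous_apply i).continuousAt.preimage_mem_nhds
    (by simp [isOpen_discrete _ |>.mem_nhds])

/-- Windows matching `x₀` occur at arbitrarily large positions along the orbit of a
recurrent point `a` having `x₀` in its orbit closure. -/
lemma exists_large_window {N : ℕ} (a x₀ : ℕ → Fin N)
    (hrec : IsRecurrentPt shift a)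
    (hx₀mem : x₀ ∈ closure (Set.range fun n : ℕ => shift^[n] a))
    (L : ℕ) : ∀ n₀ : ℕ, ∃ n ≥ n₀, ∀ i < L, a (n + i) = x₀ i := by
  -- base case: some window exists
  have hbase : ∃ n : ℕ, ∀ i < L, a (n + i) = x₀ i := by
    have := mem_closure_iff.mp hx₀mem {y | ∀ i < L, y i = x₀ i}
      (by
        have heq : {y : ℕ → Fin N | ∀ i < L, y i = x₀ i}
            = ⋂ i ∈ Finset.range L, (fun y : ℕ → Fin N => y i) ⁻¹' {x₀ i} := by
          ext y; simp [Set.mem_iInter]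
        rw [heq]
        exact isOpen_biInter_finset fun i _ =>
          (continuous_apply i).isOpen_preimage _ (isOpen_discrete _))
      (fun i _ => rfl)
    obtain ⟨y, hy, n, hn⟩ := this
    refine ⟨n, fun i hi => ?_⟩
    have h2 : shift^[n] a i = x₀ i := by
      have : (fun n : ℕ => shift^[n] a) n i = x₀ i := by rw [hn]; exact hy i hi
      exact this
    rw [shift_iterate_apply] at h2
    rw [Nat.add_comm]
    exact h2
  -- step: from any window, a strictly later one
  have hstep : ∀ n : ℕ, (∀ i < L, a (n + i) = x₀ i) →
      ∃ n' > n, ∀ i < L, a (n' + i) = x₀ i := by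
    intro n hn
    obtain ⟨p, hp, hmem⟩ := hrec {y | ∀ i < n + L, y i = a i} (agree_mem_nhds a (n + L))
    refine ⟨n + p, by omega, fun i hi => ?_⟩
    have h1 : shift^[p] a (n + i) = a (n + i) := hmem (n + i) (by omega)
    rw [shift_iterate_apply] at h1
    have : a (n + p + i) = a (n + i + p) := by ring_nf
    rw [this, h1]
    exact hn i hi
  intro n₀
  induction n₀ with
  | zero =>
    obtain ⟨n, hn⟩ := hbase
    exact ⟨n, Nat.zero_le n, hn⟩
  | succ m ih =>
    obtain ⟨n, hn, hwin⟩ := ih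
    obtain ⟨n', hn', hwin'⟩ := hstep n hwin
    exact ⟨n', by omega, hwin'⟩

/-- If `a` is a non-periodic recurrent point and `Σ(a)` contains a periodic point of
period `k`, then for all `m₁, m₂` the liminf of the distances between the orbits of
`σ^{km₁}(a)` and `σ^{km₂}(a)` is zero. -/
theorem liminf_dist_orbits_eq_zero {N k : ℕ} (hk : 0 < k) (a x₀ : ℕ → Fin N)
    (hrec : IsRecurrentPt shift a) (hper : ¬ IsPeriodicPoint shift a)
    (hx₀mem : x₀ ∈ closure (Set.range fun n : ℕ => shift^[n] a))
    (hx₀ : shift^[k] x₀ = x₀) :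
    ∀ m₁ m₂ : ℕ,
      Filter.liminf
        (fun n : ℕ => rho (shift^[n] (shift^[k * m₁] a)) (shift^[n] (shift^[k * m₂] a)))
        atTop = 0 := by
  intro m₁ m₂
  set u : ℕ → ℝ :=
    fun n => rho (shift^[n] (shift^[k * m₁] a)) (shift^[n] (shift^[k * m₂] a)) with hu
  -- periodicity of x₀ : x₀ (j + k*m) = x₀ j
  have hx₀per : ∀ m j : ℕ, x₀ (j + k * m) = x₀ j := by
    intro m j
    have h1 : shift^[k * m] x₀ = x₀ := by
      rw [Function.iterate_mul]
      exact Function.iterate_fixed hx₀ m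
    conv_rhs => rw [← h1, shift_iterate_apply]
  have hbdd_below : IsBoundedUnder (· ≥ ·) atTop u :=
    isBoundedUnder_of ⟨0, fun n => rho_nonneg _ _⟩
  have hbdd_above : IsBoundedUnder (· ≤ ·) atTop u :=
    isBoundedUnder_of ⟨1, fun n => rho_le_one _ _⟩
  apply le_antisymm
  · -- liminf ≤ 0
    apply le_of_forall_pos_le_add
    intro ε hε
    rw [zero_add]
    obtain ⟨M, hM⟩ := exists_pow_lt_of_lt_one hε (by norm_num : (1/2 : ℝ) < 1)
    have hfreq : ∃ᶠ n in atTop, u n ≤ (1/2 : ℝ) ^ M := by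
      rw [Filter.frequently_atTop]
      intro n₀
      obtain ⟨n, hn, hwin⟩ :=
        exists_large_window a x₀ hrec hx₀mem (M + k * m₁ + k * m₂) n₀
      refine ⟨n, hn, ?_⟩
      apply rho_le_of_agree
      intro j hj
      rw [shift_iterate_apply, shift_iterate_apply, shift_iterate_apply,
        shift_iterate_apply]
      have e1 : j + n + k * m₁ = n + (j + k * m₁) := by ring
      have e2 : j + n + k * m₂ = n + (j + k * m₂) := by ring
      rw [e1, e2, hwin (j + k * m₁) (by omega), hwin (j + k * m₂) (by omega),
        hx₀per m₁ j, hx₀per m₂ j]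
    exact le_trans (Filter.liminf_le_of_frequently_le hfreq hbdd_below) (le_of_lt hM)
  · -- 0 ≤ liminf
    exact Filter.le_liminf_of_le hbdd_above.isCoboundedUnder_ge
      (Filter.Eventually.of_forall fun n => rho_nonneg _ _)
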